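/- arXiv:1904.10719 — 2 statements merged into one kernel-verified Lean document; each statement's English description precedes it below -/
import Mathlib

section
/- Let ρ ≥ 1, and let s₁, s₂, opt, f be real numbers with 0 ≤ f ≤ opt. If s₁ ≤ opt + f and s₂ ≤ ρ·(opt − f) + f, then min(s₁, s₂) ≤ (2 − 1/ρ) · opt. -/
/-- Arithmetic core of Theorem 2: if `ρ ≥ 1`, `0 ≤ f ≤ opt`, `s₁ ≤ opt + f` and
`s₂ ≤ ρ·(opt − f) + f`, then `min(s₁, s₂) ≤ (2 − 1/ρ) · opt`. -/
theorem stmt_6 (ρ s₁ s₂ opt f : ℝ) (hρ : 1 ≤ ρ) (hf0 : 0 ≤ f) (hfo : f ≤ opt)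
    (h1 : s₁ ≤ opt + f) (h2 : s₂ ≤ ρ * (opt - f) + f) :
    min s₁ s₂ ≤ (2 - 1 / ρ) * opt := by
  have hρ0 : 0 < ρ := lt_of_lt_of_le one_pos hρ
  rcases le_or_gt f ((1 - 1/ρ) * opt) with h | h
  · calc min s₁ s₂ ≤ s₁ := min_le_left _ _
      _ ≤ opt + f := h1
      _ ≤ (2 - 1/ρ) * opt := by linarith
  · calc min s₁ s₂ ≤ s₂ := min_le_right _ _
      _ ≤ ρ * (opt - f) + f := h2
      _ ≤ (2 - 1/ρ) * opt := by
        have h' : (1 - 1/ρ) * opt < f := h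
        have hinv : ρ * (1/ρ) = 1 := mul_one_div_cancel (ne_of_gt hρ0)
        nlinarith [mul_le_mul_of_nonneg_left (le_of_lt h') (sub_nonneg.2 hρ)]
end

section
/- Let G = (V,E) be a finite simple graph with maximum degree at most Δ (Δ ≥ 2) that contains no path of order k, where k ≥ 4, and let V_A ⊆ V be a nonempty vertex set. For each integer d ≥ 1, the set of vertices v ∈ V whose graph distance to V_A equals d (i.e., min_{a ∈ V_A} dist(v,a) = d) has cardinality at most |V_A| · Δ · (Δ−1)^{⌈(k−5)/2⌉}. -/
noncomputable def distToSet {V : Type*} (G : SimpleGraph V) (A : Set V) (v : V) : ℕ :=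
  sInf {n | ∃ a ∈ A, G.Reachable v a ∧ G.dist v a = n}

namespace Stmt7

variable {V : Type*} (G : SimpleGraph V) (VA : Set V)

lemma exists_witness {v : V} (hv : 1 ≤ distToSet G VA v) :
    ∃ a ∈ VA, G.Reachable v a ∧ G.dist v a = distToSet G VA v := by
  have hne : {n | ∃ a ∈ VA, G.Reachable v a ∧ G.dist v a = n}.Nonempty := by
    by_contra h
    rw [Set.not_nonempty_iff_eq_empty] at h
    rw [distToSet, h] at hv
    simp at hv
  have := Nat.sInf_mem hne
  exact this

lemma distToSet_le {v a : V} (ha : a ∈ VA) (hr : G.Reachable v a) :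
    distToSet G VA v ≤ G.dist v a :=
  Nat.sInf_le ⟨a, ha, hr, rfl⟩

lemma exists_parent {v : V} (hv : 1 ≤ distToSet G VA v) :
    ∃ w, G.Adj v w ∧ distToSet G VA w + 1 = distToSet G VA v ∧
      ∃ a ∈ VA, G.Reachable w a ∧ G.dist w a = distToSet G VA w := by
  obtain ⟨a, haA, hreach, hdist⟩ := exists_witness G VA hv
  obtain ⟨p, hp, hlen⟩ := hreach.exists_path_of_dist
  set n := distToSet G VA v with hn
  cases p with
  | nil => rw [SimpleGraph.dist_self] at hdist; omega
  | @cons _ w _ hadj q =>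
    have hql : q.length = n - 1 := by
      simp [hdist] at hlen; omega
    have hwr : G.Reachable w a := q.reachable
    have hdwa : G.dist w a = n - 1 := by
      have h1 : G.dist w a ≤ n - 1 := hql ▸ SimpleGraph.dist_le q
      obtain ⟨r, hrp, hrl⟩ := hwr.exists_path_of_dist
      have h2 : G.dist v a ≤ G.dist w a + 1 := by
        have := SimpleGraph.dist_le (SimpleGraph.Walk.cons hadj r)
        simpa [hrl, Nat.add_comm] using this
      omega
    have hDw : distToSet G VA w = n - 1 := by
      apply le_antisymm
      · exact hdwa ▸ distToSet_le G VA haA hwr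
      · have hne : {m | ∃ a ∈ VA, G.Reachable w a ∧ G.dist w a = m}.Nonempty :=
          ⟨n - 1, a, haA, hwr, hdwa⟩
        apply le_csInf hne
        rintro m ⟨a', ha', hr', hd'⟩
        obtain ⟨r, hrp, hrl⟩ := hr'.exists_path_of_dist
        have h2 : G.dist v a' ≤ m + 1 := by
          have := SimpleGraph.dist_le (SimpleGraph.Walk.cons hadj r)
          simpa [hrl, hd', Nat.add_comm] using this
        have h3 : n ≤ G.dist v a' :=
          distToSet_le G VA ha' ((SimpleGraph.Walk.cons hadj r).reachable)
        omega
    exact ⟨w, hadj, by omega, a, haA, hwr, hDw ▸ hdwa⟩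

open Classical in
noncomputable def par (v : V) : V :=
  if h : 1 ≤ distToSet G VA v then (exists_parent G VA h).choose else v

lemma par_spec {v : V} (hv : 1 ≤ distToSet G VA v) :
    G.Adj v (par G VA v) ∧ distToSet G VA (par G VA v) + 1 = distToSet G VA v ∧
      ∃ a ∈ VA, G.Reachable (par G VA v) a ∧
        G.dist (par G VA v) a = distToSet G VA (par G VA v) := by
  rw [par, dif_pos hv]
  exact (exists_parent G VA hv).choose_spec

lemma par_adj {v : V} (hv : 1 ≤ distToSet G VA v) : G.Adj v (par G VA v) :=
  (par_spec G VA hv).1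

lemma dist_par {v : V} (hv : 1 ≤ distToSet G VA v) :
    distToSet G VA (par G VA v) + 1 = distToSet G VA v :=
  (par_spec G VA hv).2.1

lemma dist_iterate : ∀ (i : ℕ) (v : V), i ≤ distToSet G VA v →
    distToSet G VA ((par G VA)^[i] v) = distToSet G VA v - i := by
  intro i
  induction i with
  | zero => intro v _; simp
  | succ i ih =>
    intro v h
    have h1 : 1 ≤ distToSet G VA v := by omega
    have h2 := dist_par G VA h1
    rw [Function.iterate_succ_apply]
    rw [ih (par G VA v) (by omega)]
    omega

lemma iterate_mem_VA : ∀ (n : ℕ) (v : V), distToSet G VA v = n → 1 ≤ n →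
    (par G VA)^[n] v ∈ VA := by
  intro n
  induction n with
  | zero => omega
  | succ n ih =>
    intro v hv _
    have h1 : 1 ≤ distToSet G VA v := by omega
    have h2 := dist_par G VA h1
    rw [Function.iterate_succ_apply]
    rcases Nat.eq_zero_or_pos n with h0 | hpos
    · subst h0
      obtain ⟨a, haA, hr, hdist⟩ := (par_spec G VA h1).2.2
      rw [show distToSet G VA (par G VA v) = 0 by omega] at hdist
      obtain ⟨p, hp, hl⟩ := hr.exists_path_of_dist
      rw [hdist] at hl
      have := SimpleGraph.Walk.eq_of_length_eq_zero hl
      simpa [this] using haA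
    · exact ih (par G VA v) (by omega) hpos

noncomputable def upWalk : (j : ℕ) → (v : V) → j ≤ distToSet G VA v →
    G.Walk v ((par G VA)^[j] v)
  | 0, v, _ => SimpleGraph.Walk.nil
  | (j+1), v, h =>
    SimpleGraph.Walk.cons (par_adj G VA (by omega))
      (upWalk j (par G VA v) (by have := dist_par G VA (by omega : 1 ≤ distToSet G VA v); omega))

lemma upWalk_support : ∀ (j : ℕ) (v : V) (h : j ≤ distToSet G VA v),
    (upWalk G VA j v h).support = (List.range (j+1)).map (fun i => (par G VA)^[i] v) := by
  intro j
  induction j with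
  | zero => intro v h; simp [upWalk]
  | succ j ih =>
    intro v h
    erw [upWalk, SimpleGraph.Walk.support_cons, ih]
    rw [List.range_succ_eq_map]
    simp [List.map_map, Function.iterate_succ_apply, Function.comp_def]

lemma upWalk_length : ∀ (j : ℕ) (v : V) (h : j ≤ distToSet G VA v),
    (upWalk G VA j v h).length = j := by
  intro j
  induction j with
  | zero => intro v h; simp [upWalk]
  | succ j ih => intro v h; erw [upWalk, SimpleGraph.Walk.length_cons, ih]


lemma exists_path_of_le {u v : V} {G : SimpleGraph V} (p : G.Walk u v) (hp : p.IsPath) :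
    ∀ n ≤ p.length, ∃ (x y : V) (q : G.Walk x y), q.IsPath ∧ q.length = n := by
  induction p with
  | nil =>
    intro n hn
    simp at hn
    exact ⟨u, u, SimpleGraph.Walk.nil, SimpleGraph.Walk.IsPath.nil, by simp [hn]⟩
  | @cons a b c h q ih =>
    intro n hn
    rcases Nat.lt_or_ge n (q.length + 1) with h1 | h2
    · exact ih hp.of_cons n (by omega)
    · refine ⟨_, _, SimpleGraph.Walk.cons h q, hp, ?_⟩
      simp only [SimpleGraph.Walk.length_cons] at hn ⊢
      omega

lemma meet {k : ℕ} (hk : 4 ≤ k)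
    (hnp : ∀ (u v : V) (p : G.Walk u v), p.IsPath → p.support.length ≠ k)
    {d : ℕ} (hd : 1 ≤ d) {u v : V}
    (hu : distToSet G VA u = d) (hv : distToSet G VA v = d)
    (h : (par G VA)^[d] u = (par G VA)^[d] v) :
    (par G VA)^[min ((k-2)/2) d] u = (par G VA)^[min ((k-2)/2) d] v := by
  by_cases huv : u = v
  · rw [huv]
  set c : V → ℕ → V := fun x i => (par G VA)^[i] x with hc
  set J : Set ℕ := {i | c u i = c v i} with hJ
  have hdJ : d ∈ J := h
  set j := sInf J with hjdef
  have hjJ : j ∈ J := Nat.sInf_mem ⟨d, hdJ⟩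
  have hjd : j ≤ d := Nat.sInf_le hdJ
  have hj1 : 1 ≤ j := by
    rcases Nat.eq_zero_or_pos j with h0 | h1
    · exfalso; apply huv; have := hjJ; rw [h0] at this; exact this
    · exact h1
  have hmin : ∀ i < j, c u i ≠ c v i := fun i hi => Nat.notMem_of_lt_sInf hi
  -- build the path
  have hju : j ≤ distToSet G VA u := hu ▸ hjd
  have hjv : j ≤ distToSet G VA v := hv ▸ hjd
  have hcast : (par G VA)^[j] v = (par G VA)^[j] u := hjJ.symm
  set W : G.Walk u v :=
    (upWalk G VA j u hju).append ((upWalk G VA j v hjv).reverse.copy hcast rfl) with hW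
  have hsupp : W.support =
      ((List.range (j+1)).map (c u)) ++ (((List.range j).map (c v)).reverse) := by
    rw [hW, SimpleGraph.Walk.support_append, SimpleGraph.Walk.support_copy,
      SimpleGraph.Walk.support_reverse, upWalk_support, upWalk_support]
    congr 1
    rw [List.range_succ, List.map_append, List.reverse_append, List.map_singleton,
      List.reverse_singleton, List.singleton_append, List.tail_cons]
  have hlevu : ∀ i ≤ j, distToSet G VA (c u i) = d - i := by
    intro i hi
    have := dist_iterate G VA i u (by omega)
    rw [hu] at this; exact this
  have hlevv : ∀ i ≤ j, distToSet G VA (c v i) = d - i := by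
    intro i hi
    have := dist_iterate G VA i v (by omega)
    rw [hv] at this; exact this
  have hnodup : W.support.Nodup := by
    rw [hsupp, List.nodup_append]
    refine ⟨?_, ?_, ?_⟩
    · apply List.nodup_range.map_on
      intro i hi i' hi' hee
      rw [List.mem_range] at hi hi'
      have e1 := hlevu i (by omega)
      have e2 := hlevu i' (by omega)
      rw [hee] at e1; omega
    · rw [List.nodup_reverse]
      apply List.nodup_range.map_on
      intro i hi i' hi' hee
      rw [List.mem_range] at hi hi'
      have e1 := hlevv i (by omega)
      have e2 := hlevv i' (by omega)
      rw [hee] at e1; omega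
    · intro x hx y hx' hxy
      subst hxy
      rw [List.mem_map] at hx
      rw [List.mem_reverse, List.mem_map] at hx'
      obtain ⟨i, hi, rfl⟩ := hx
      obtain ⟨i', hi', he⟩ := hx'
      rw [List.mem_range] at hi hi'
      have e1 := hlevu i (by omega)
      have e2 := hlevv i' (by omega)
      have : i = i' := by rw [he] at e2; omega
      subst this
      exact hmin i hi' he.symm
  have hWpath : W.IsPath := (SimpleGraph.Walk.isPath_def W).mpr hnodup
  have hWlen : W.length = 2 * j := by
    rw [hW, SimpleGraph.Walk.length_append, SimpleGraph.Walk.length_copy,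
      SimpleGraph.Walk.length_reverse, upWalk_length, upWalk_length]
    omega
  have hlt : 2 * j + 1 < k := by
    by_contra hcon
    push_neg at hcon
    obtain ⟨x, y, q, hq, hql⟩ := exists_path_of_le W hWpath (k - 1) (by omega)
    exact hnp x y q hq (by rw [SimpleGraph.Walk.length_support, hql]; omega)
  have hjs : j ≤ (k - 2) / 2 := by
    rw [Nat.le_div_iff_mul_le (by norm_num)]
    omega
  have hjt : j ≤ min ((k-2)/2) d := le_min hjs hjd
  have : min ((k-2)/2) d = (min ((k-2)/2) d - j) + j := by omega
  rw [this, Function.iterate_add_apply, Function.iterate_add_apply]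
  exact congrArg _ hjJ


end Stmt7

/-- Lemma 2: in a finite graph `G` of maximum degree at most `Δ ≥ 2` containing no
path of order `k` (`k ≥ 4`), for every `d ≥ 1` the set of vertices at distance
exactly `d` from a nonempty set `V_A` has cardinality at most
`|V_A| · Δ · (Δ−1)^⌈(k−5)/2⌉` (note `⌈(k−5)/2⌉ = (k−4)/2` in ℕ for `k ≥ 4`). -/
theorem stmt_7 {V : Type*} [Fintype V] (G : SimpleGraph V) (Δ k : ℕ)
    (hΔ : 2 ≤ Δ) (hdeg : ∀ v : V, (G.neighborSet v).ncard ≤ Δ) (hk : 4 ≤ k)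
    (hnp : ∀ (u v : V) (p : G.Walk u v), p.IsPath → p.support.length ≠ k)
    (VA : Set V) (hVA : VA.Nonempty) (d : ℕ) (hd : 1 ≤ d) :
    {v : V | distToSet G VA v = d}.ncard ≤ VA.ncard * Δ * (Δ - 1) ^ ((k - 4) / 2) := by
  classical
  set B := Δ * (Δ - 1) ^ ((k - 4) / 2) with hB
  set t := min ((k-2)/2) d with htdef
  have ht1 : 1 ≤ t := by
    apply le_min _ hd
    omega
  have htd : t ≤ d := min_le_right _ _
  have hts : t - 1 ≤ (k - 4) / 2 := by
    have : t ≤ (k-2)/2 := min_le_left _ _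
    omega
  set L : Finset V := Finset.univ.filter (fun v => distToSet G VA v = d) with hL
  have hset : {v : V | distToSet G VA v = d} = ↑L := by
    ext x; simp [hL]
  rw [hset, Set.ncard_coe_finset]
  set FA : Finset V := VA.toFinite.toFinset with hFA
  have hVAcard : VA.ncard = FA.card := Set.ncard_eq_toFinset_card VA VA.toFinite
  set f : V → V := fun v => (Stmt7.par G VA)^[d] v with hf
  have hmaps : ∀ v ∈ L, f v ∈ L.image f := fun v hv => Finset.mem_image_of_mem f hv
  have himg : L.image f ⊆ FA := by
    intro a ha
    rw [Finset.mem_image] at ha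
    obtain ⟨v, hv, rfl⟩ := ha
    rw [hL, Finset.mem_filter] at hv
    rw [hFA, Set.Finite.mem_toFinset]
    exact Stmt7.iterate_mem_VA G VA d v hv.2 hd
  -- fiber bound
  have hfiber : ∀ a ∈ L.image f, (L.filter (fun v => f v = a)).card ≤ B := by
    intro a ha
    set F := L.filter (fun v => f v = a) with hFdef
    rcases Finset.eq_empty_or_nonempty F with hF | ⟨u₀, hu₀⟩
    · simp [hF]
    have hu₀L : distToSet G VA u₀ = d := by
      rw [hFdef, Finset.mem_filter, hL, Finset.mem_filter] at hu₀
      exact hu₀.1.2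
    set w := (Stmt7.par G VA)^[t] u₀ with hw
    have hall : ∀ v ∈ F, (Stmt7.par G VA)^[t] v = w := by
      intro v hv
      rw [hFdef, Finset.mem_filter, hL, Finset.mem_filter] at hv hu₀
      have hvd : distToSet G VA v = d := hv.1.2
      have heq : (Stmt7.par G VA)^[d] v = (Stmt7.par G VA)^[d] u₀ := by
        have h1 : (Stmt7.par G VA)^[d] v = a := hv.2
        have h2 : (Stmt7.par G VA)^[d] u₀ = a := hu₀.2
        rw [h1, h2]
      exact Stmt7.meet G VA hk hnp hd hvd hu₀L heq
    -- the chain counting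
    set T : ℕ → Finset V := fun i =>
      Finset.univ.filter (fun v => distToSet G VA v = (d - t) + i ∧ (Stmt7.par G VA)^[i] v = w)
      with hT
    have hFT : F ⊆ T t := by
      intro v hv
      have h1 := hall v hv
      rw [hFdef, Finset.mem_filter, hL, Finset.mem_filter] at hv
      rw [hT, Finset.mem_filter]
      exact ⟨Finset.mem_univ _, by rw [hv.1.2]; omega, h1⟩
    have hT0 : (T 0).card ≤ 1 := by
      have : T 0 ⊆ {w} := by
        intro v hv
        rw [hT, Finset.mem_filter] at hv
        simpa using hv.2.2
      simpa using Finset.card_le_card this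
    have hmapsT : ∀ i, ∀ v ∈ T (i+1), Stmt7.par G VA v ∈ T i := by
      intro i v hv
      rw [hT, Finset.mem_filter] at hv ⊢
      obtain ⟨-, hDv, hit⟩ := hv
      have h1 : 1 ≤ distToSet G VA v := by omega
      have h2 := Stmt7.dist_par G VA h1
      refine ⟨Finset.mem_univ _, by omega, ?_⟩
      rw [← Function.iterate_succ_apply]
      exact hit
    -- degree bound for fibers of par
    have hnbr : ∀ x : V, ((G.neighborSet x).toFinite.toFinset).card ≤ Δ := by
      intro x
      rw [← Set.ncard_eq_toFinset_card]
      exact hdeg x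
    have hstep0 : (T 1).card ≤ Δ * (T 0).card := by
      apply Finset.card_le_mul_card_image_of_maps_to (hmapsT 0)
      intro x hx
      apply le_trans (Finset.card_le_card _) (hnbr x)
      intro v hv
      rw [Finset.mem_filter] at hv
      obtain ⟨hvT, hpv⟩ := hv
      rw [hT, Finset.mem_filter] at hvT
      have h1 : 1 ≤ distToSet G VA v := by omega
      have hadj := Stmt7.par_adj G VA h1
      rw [hpv] at hadj
      rw [Set.Finite.mem_toFinset]
      exact hadj.symm
    have hstep : ∀ i, 1 ≤ i → (T (i+1)).card ≤ (Δ - 1) * (T i).card := by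
      intro i hi
      apply Finset.card_le_mul_card_image_of_maps_to (hmapsT i)
      intro x hx
      have hxT := hx
      rw [hT, Finset.mem_filter] at hxT
      have hx1 : 1 ≤ distToSet G VA x := by omega
      have hadjx := Stmt7.par_adj G VA hx1
      have hpx := Stmt7.dist_par G VA hx1
      have hsub : (T (i+1)).filter (fun v => Stmt7.par G VA v = x) ⊆
          (G.neighborSet x).toFinite.toFinset \ {Stmt7.par G VA x} := by
        intro v hv
        rw [Finset.mem_filter] at hv
        obtain ⟨hvT, hpv⟩ := hv
        rw [hT, Finset.mem_filter] at hvT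
        have h1 : 1 ≤ distToSet G VA v := by omega
        have hadj := Stmt7.par_adj G VA h1
        rw [hpv] at hadj
        rw [Finset.mem_sdiff, Set.Finite.mem_toFinset, Finset.mem_singleton]
        refine ⟨hadj.symm, ?_⟩
        intro hcon
        have := hvT.2.1
        rw [hcon] at this
        omega
      apply le_trans (Finset.card_le_card hsub)
      have hmem : Stmt7.par G VA x ∈ (G.neighborSet x).toFinite.toFinset := by
        rw [Set.Finite.mem_toFinset]; exact hadjx
      rw [Finset.sdiff_singleton_eq_erase, Finset.card_erase_of_mem hmem]
      have := hnbr x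
      omega
    have hTbound : ∀ i, 1 ≤ i → (T i).card ≤ Δ * (Δ - 1) ^ (i - 1) := by
      intro i
      induction i with
      | zero => omega
      | succ i ih =>
        intro _
        rcases Nat.eq_zero_or_pos i with h0 | hpos
        · subst h0
          simpa using le_trans hstep0 (by simpa using Nat.mul_le_mul_left Δ hT0)
        · calc (T (i+1)).card ≤ (Δ - 1) * (T i).card := hstep i hpos
            _ ≤ (Δ - 1) * (Δ * (Δ - 1) ^ (i - 1)) := Nat.mul_le_mul_left _ (ih hpos)
            _ = Δ * ((Δ - 1) ^ (i - 1) * (Δ - 1)) := by ring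
            _ = Δ * (Δ - 1) ^ (i - 1 + 1) := by rw [pow_succ]
            _ = Δ * (Δ - 1) ^ i := by rw [show i - 1 + 1 = i from by omega]
    calc F.card ≤ (T t).card := Finset.card_le_card hFT
      _ ≤ Δ * (Δ - 1) ^ (t - 1) := hTbound t ht1
      _ ≤ B := by
          rw [hB]
          apply Nat.mul_le_mul_left
          exact Nat.pow_le_pow_right (by omega) hts
  -- assemble
  calc L.card = ∑ a ∈ L.image f, (L.filter (fun v => f v = a)).card :=
        Finset.card_eq_sum_card_fiberwise hmaps
    _ ≤ ∑ _a ∈ L.image f, B := Finset.sum_le_sum hfiber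
    _ = (L.image f).card * B := by rw [Finset.sum_const, smul_eq_mul]
    _ ≤ FA.card * B := Nat.mul_le_mul_right _ (Finset.card_le_card himg)
    _ = VA.ncard * Δ * (Δ - 1) ^ ((k - 4) / 2) := by rw [← hVAcard, hB, mul_assoc]
end
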